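/- Let k be even and let G=(V,E) be a k-uniform hyperstar of size d>0 with Laplacian tensor L. If x∈ℝ^n is an H-eigenvector of L corresponding to λ(L), then sup(x)=[n]. Moreover, there exists an H-eigenvector z∈ℝ^n of L corresponding to λ(L) such that z_i takes one constant value for all vertices i other than the heart. -/

import Mathlib

open Finset

variable {α : Type*} [DecidableEq α]

/-- The degree of a vertex `i`: the number of edges containing `i`. -/
def hdeg (E : Finset (Finset α)) (i : α) : ℕ := (E.filter (fun e => i ∈ e)).card

/-- The action of the Laplacian tensor: `(L x^{k-1})_i`. -/
def lapAct (k : ℕ) (E : Finset (Finset α)) (x : α → ℝ) (i : α) : ℝ :=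
  (hdeg E i : ℝ) * x i ^ (k - 1) - ∑ e ∈ E.filter (fun e => i ∈ e), ∏ j ∈ e.erase i, x j

/-- The action of the signless Laplacian tensor: `(Q x^{k-1})_i`. -/
def signAct (k : ℕ) (E : Finset (Finset α)) (x : α → ℝ) (i : α) : ℝ :=
  (hdeg E i : ℝ) * x i ^ (k - 1) + ∑ e ∈ E.filter (fun e => i ∈ e), ∏ j ∈ e.erase i, x j

/-- The action of the adjacency tensor: `(A x^{k-1})_i`. -/
def adjAct (E : Finset (Finset α)) (x : α → ℝ) (i : α) : ℝ :=
  ∑ e ∈ E.filter (fun e => i ∈ e), ∏ j ∈ e.erase i, x j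

/-- `lam` is an H-eigenvalue of the Laplacian tensor. -/
def IsLapEig (k : ℕ) (E : Finset (Finset α)) (lam : ℝ) : Prop :=
  ∃ x : α → ℝ, x ≠ 0 ∧ ∀ i, lapAct k E x i = lam * x i ^ (k - 1)

/-- `lam` is the largest H-eigenvalue of the Laplacian tensor. -/
def IsLargestLapEig (k : ℕ) (E : Finset (Finset α)) (lam : ℝ) : Prop :=
  IsLapEig k E lam ∧ ∀ mu : ℝ, IsLapEig k E mu → mu ≤ lam

/-- `lam` is an H-eigenvalue of the signless Laplacian tensor. -/
def IsSignEig (k : ℕ) (E : Finset (Finset α)) (lam : ℝ) : Prop :=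
  ∃ x : α → ℝ, x ≠ 0 ∧ ∀ i, signAct k E x i = lam * x i ^ (k - 1)

/-- `lam` is the largest H-eigenvalue of the signless Laplacian tensor. -/
def IsLargestSignEig (k : ℕ) (E : Finset (Finset α)) (lam : ℝ) : Prop :=
  IsSignEig k E lam ∧ ∀ mu : ℝ, IsSignEig k E mu → mu ≤ lam

/-- `lam` is an H-eigenvalue of the adjacency tensor. -/
def IsAdjEig (k : ℕ) (E : Finset (Finset α)) (lam : ℝ) : Prop :=
  ∃ x : α → ℝ, x ≠ 0 ∧ ∀ i, adjAct E x i = lam * x i ^ (k - 1)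

/-- `lam` is the largest H-eigenvalue of the adjacency tensor. -/
def IsLargestAdjEig (k : ℕ) (E : Finset (Finset α)) (lam : ℝ) : Prop :=
  IsAdjEig k E lam ∧ ∀ mu : ℝ, IsAdjEig k E mu → mu ≤ lam

/-- `G = (V, E)` is a `k`-uniform hyperstar of size `d`: there is a heart `h` and a
disjoint partition of the remaining vertices into `d` parts of size `k-1`, the edges
being the heart together with one part. -/
def IsHyperstar (k d : ℕ) (E : Finset (Finset α)) : Prop :=
  ∃ (h : α) (P : Fin d → Finset α),
    (∀ i, h ∉ P i) ∧
    (∀ i, (P i).card = k - 1) ∧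
    (∀ i j, i ≠ j → Disjoint (P i) (P j)) ∧
    (∀ v : α, v ≠ h → ∃ i, v ∈ P i) ∧
    E = Finset.image (fun i => insert h (P i)) Finset.univ

/-- The hypergraph is connected: any two distinct vertices are joined by a chain of
pairwise intersecting edges. -/
def IsConnectedH (E : Finset (Finset α)) : Prop :=
  ∀ i j : α, i ≠ j → Relation.TransGen (fun a b : α => ∃ e ∈ E, a ∈ e ∧ b ∈ e) i j

/-- For `k` even: the hypergraph is odd-bipartite. -/
def IsOddBipartite [Fintype α] (E : Finset (Finset α)) : Prop :=
  E = ∅ ∨ ∃ V₁ : Finset α, V₁ ≠ ∅ ∧ V₁ ≠ Finset.univ ∧ ∀ e ∈ E, Odd (e ∩ V₁).card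

/-- `G = (V, E)` is a `k`-uniform hypercycle of size `s`. -/
def IsHypercycle (k : ℕ) (s : ℕ) [NeZero s] (E : Finset (Finset α)) : Prop :=
  ∃ P : Fin s → Finset α,
    (∀ i, (P i).card = k) ∧
    (∀ v : α, ∃ i, v ∈ P i) ∧
    E = Finset.image P Finset.univ ∧
    (∀ i : Fin s, (P i ∩ P (i + 1)).card = 1) ∧
    (∀ i j : Fin s, i ≠ j → j ≠ i + 1 → i ≠ j + 1 → P i ∩ P j = ∅) ∧
    Function.Injective (fun i : Fin s => P i ∩ P (i + 1))

/-!
At the heart `h` the eigen-equation reads `(d - λ) x_h^{k-1} = ∑ᵢ ∏_{P i} x`, and at a vertex `v`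
of a petal `P i` it reads `(1 - λ) x_v^{k-1} = x_h ∏_{P i ∖ v} x`. Multiplying the petal equations
over a petal without zero entries gives `(1 - λ)^{k-1} ∏_{P i} x = x_h^{k-1}`, and a petal with a
zero entry contributes nothing to the heart equation. Since `k - 1` is odd, any eigenvalue `λ ≠ 1`
is therefore a root of `(t - d)(t - 1)^{k-1} = s`, where `s ≤ d` counts the petals without zero
entries. The vector equal to `1 - t` at the heart and `1` elsewhere is an eigenvector for the root
`t > d` of `(t - d)(t - 1)^{k-1} = d`, so `λ(L) ≥ t`; as the left-hand side is increasing on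
`(d, ∞)`, this forces `λ(L) = t` and `s = d` for every eigenvector of `λ(L)`.
-/

open Finset Function

set_option linter.unusedSectionVars false

lemma exists_gt_sub_mul_sub_one_pow_eq (m : ℕ) {D : ℝ} (hD : 1 ≤ D) :
    ∃ t, D < t ∧ (t - D) * (t - 1) ^ m = D := by
  have hcont : ContinuousOn (fun t : ℝ => (t - D) * (t - 1) ^ m) (Set.Icc D (2 * D)) :=
    (by fun_prop : Continuous fun t : ℝ => (t - D) * (t - 1) ^ m).continuousOn
  have hmem : D ∈ Set.Icc ((D - D) * (D - 1) ^ m) ((2 * D - D) * (2 * D - 1) ^ m) := by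
    constructor
    · simp only [sub_self, zero_mul]
      linarith
    · have : 1 ≤ (2 * D - 1) ^ m := one_le_pow₀ (by linarith)
      nlinarith
  obtain ⟨t, ht, hteq⟩ := intermediate_value_Icc (by linarith) hcont hmem
  refine ⟨t, lt_of_le_of_ne ht.1 ?_, hteq⟩
  rintro rfl
  simp only [sub_self, zero_mul] at hteq
  linarith

lemma strictMonoOn_sub_mul_sub_one_pow (m : ℕ) {D : ℝ} (hD : 1 ≤ D) :
    StrictMonoOn (fun t : ℝ => (t - D) * (t - 1) ^ m) (Set.Ioi D) := by
  intro a (ha : D < a) b _ hab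
  calc (a - D) * (a - 1) ^ m ≤ (a - D) * (b - 1) ^ m := by
        gcongr
        linarith
    _ < (b - D) * (b - 1) ^ m :=
        mul_lt_mul_of_pos_right (by linarith) (pow_pos (by linarith) m)

def IsLapEigvec (k : ℕ) (E : Finset (Finset α)) (lam : ℝ) (x : α → ℝ) : Prop :=
  ∀ i, lapAct k E x i = lam * x i ^ (k - 1)

variable {ι : Type*}

def hyperstarEdges [Fintype ι] (h : α) (P : ι → Finset α) : Finset (Finset α) :=
  univ.image fun i => insert h (P i)

structure IsHyperstarPartition (k : ℕ) (h : α) (P : ι → Finset α) : Prop where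
  heart_notMem : ∀ i, h ∉ P i
  card_eq : ∀ i, (P i).card = k - 1
  pairwise_disjoint : Pairwise (Disjoint on P)
  exists_mem : ∀ v, v ≠ h → ∃ i, v ∈ P i

namespace IsHyperstarPartition

variable {k : ℕ} {h : α} {P : ι → Finset α}

lemma nonempty (hS : IsHyperstarPartition k h P) (hk : 2 ≤ k) (i : ι) : (P i).Nonempty :=
  card_pos.mp (by rw [hS.card_eq]; omega)

lemma ne_heart (hS : IsHyperstarPartition k h P) {i : ι} {v : α} (hv : v ∈ P i) : v ≠ h :=
  fun hvh => hS.heart_notMem i (hvh ▸ hv)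

lemma eq_of_mem (hS : IsHyperstarPartition k h P) {i j : ι} {v : α} (hi : v ∈ P i)
    (hj : v ∈ P j) : i = j :=
  by_contra fun hij => disjoint_left.mp (hS.pairwise_disjoint hij) hi hj

lemma insert_injective (hS : IsHyperstarPartition k h P) (hk : 2 ≤ k) :
    Injective fun i => insert h (P i) := by
  intro i j hij
  have hP : P i = P j := by
    simpa [erase_insert (hS.heart_notMem i), erase_insert (hS.heart_notMem j)]
      using congrArg (·.erase h) hij
  obtain ⟨v, hv⟩ := hS.nonempty hk i
  exact hS.eq_of_mem hv (hP ▸ hv)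

variable [Fintype ι]

lemma update_one_ne_zero (hS : IsHyperstarPartition k h P) (hk : 2 ≤ k) [Nonempty ι] (c : ℝ) :
    update (1 : α → ℝ) h c ≠ 0 := by
  obtain ⟨v, hv⟩ := hS.nonempty hk (Classical.arbitrary ι)
  intro h0
  simpa [update_of_ne (hS.ne_heart hv)] using congrFun h0 v

lemma filter_mem_petal (hS : IsHyperstarPartition k h P) {i : ι} {v : α} (hv : v ∈ P i) :
    (hyperstarEdges h P).filter (fun e => v ∈ e) = {insert h (P i)} := by
  ext e
  simp only [hyperstarEdges, mem_filter, mem_image, mem_univ, true_and, mem_singleton]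
  constructor
  · rintro ⟨⟨j, rfl⟩, hve⟩
    rcases mem_insert.mp hve with hvh | hvj
    · exact absurd hvh (hS.ne_heart hv)
    · rw [hS.eq_of_mem hvj hv]
  · rintro rfl
    exact ⟨⟨i, rfl⟩, mem_insert_of_mem hv⟩

lemma lapAct_heart (hS : IsHyperstarPartition k h P) (hk : 2 ≤ k) (x : α → ℝ) :
    lapAct k (hyperstarEdges h P) x h = Fintype.card ι * x h ^ (k - 1) - ∑ i, ∏ j ∈ P i, x j := by
  have hfilter : (hyperstarEdges h P).filter (fun e => h ∈ e) = hyperstarEdges h P :=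
    filter_true_of_mem (by simp [hyperstarEdges])
  rw [lapAct, hdeg, hfilter, hyperstarEdges, card_image_of_injective _ (hS.insert_injective hk),
    sum_image fun i _ j _ hij => hS.insert_injective hk hij, card_univ]
  simp only [erase_insert (hS.heart_notMem _)]

lemma lapAct_petal (hS : IsHyperstarPartition k h P) {i : ι} {v : α} (hv : v ∈ P i)
    (x : α → ℝ) :
    lapAct k (hyperstarEdges h P) x v = x v ^ (k - 1) - x h * ∏ j ∈ (P i).erase v, x j := by
  rw [lapAct, hdeg, hS.filter_mem_petal hv, card_singleton, sum_singleton,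
    erase_insert_of_ne (hS.ne_heart hv).symm,
    prod_insert fun hmem => hS.heart_notMem i (mem_of_mem_erase hmem)]
  push_cast
  ring

lemma isLapEigvec_update_one (hS : IsHyperstarPartition k h P) (hodd : Odd (k - 1)) {t : ℝ}
    (ht : (t - Fintype.card ι) * (t - 1) ^ (k - 1) = Fintype.card ι) :
    IsLapEigvec k (hyperstarEdges h P) t (update 1 h (1 - t)) := by
  have hk : 2 ≤ k := by have := hodd.pos; omega
  have hpetal : ∀ {i v}, v ∈ P i → update (1 : α → ℝ) h (1 - t) v = 1 :=
    fun hv => update_of_ne (hS.ne_heart hv) _ _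
  intro v
  rcases eq_or_ne v h with rfl | hvh
  · have hneg : (1 - t) ^ (k - 1) = -(t - 1) ^ (k - 1) := by
      rw [← hodd.neg_pow, neg_sub]
    rw [hS.lapAct_heart hk, update_self, hneg,
      sum_congr rfl fun i _ => prod_eq_one fun j hj => hpetal hj]
    simp only [sum_const, card_univ, nsmul_eq_mul, mul_one]
    linear_combination ht
  · obtain ⟨i, hi⟩ := hS.exists_mem v hvh
    rw [hS.lapAct_petal hi, hpetal hi, update_self,
      prod_eq_one fun j hj => hpetal (mem_of_mem_erase hj)]
    ring

section Eigvec

variable {lam : ℝ} {x : α → ℝ}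

lemma heart_eq (hS : IsHyperstarPartition k h P) (hk : 2 ≤ k)
    (hx : IsLapEigvec k (hyperstarEdges h P) lam x) :
    (Fintype.card ι - lam) * x h ^ (k - 1) = ∑ i, ∏ j ∈ P i, x j := by
  linear_combination hx h - hS.lapAct_heart hk x

lemma petal_eq (hS : IsHyperstarPartition k h P) (hx : IsLapEigvec k (hyperstarEdges h P) lam x)
    {i : ι} {v : α} (hv : v ∈ P i) :
    (1 - lam) * x v ^ (k - 1) = x h * ∏ j ∈ (P i).erase v, x j := by
  linear_combination hx v - hS.lapAct_petal hv x

lemma heart_ne_zero (hS : IsHyperstarPartition k h P)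
    (hx : IsLapEigvec k (hyperstarEdges h P) lam x) (hx0 : x ≠ 0) (hlam : lam ≠ 1) :
    x h ≠ 0 := by
  intro hxh
  refine hx0 (funext fun v => ?_)
  rcases eq_or_ne v h with rfl | hvh
  · exact hxh
  · obtain ⟨i, hi⟩ := hS.exists_mem v hvh
    have := hS.petal_eq hx hi
    rw [hxh, zero_mul, mul_eq_zero, sub_eq_zero] at this
    exact eq_zero_of_pow_eq_zero (this.resolve_left (Ne.symm hlam))

lemma petal_prod_eq (hS : IsHyperstarPartition k h P)
    (hx : IsLapEigvec k (hyperstarEdges h P) lam x) {i : ι} (hi : ∀ v ∈ P i, x v ≠ 0) :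
    (1 - lam) ^ (k - 1) * ∏ j ∈ P i, x j = x h ^ (k - 1) := by
  have hv : ∀ v ∈ P i, (1 - lam) * x v ^ (k - 1 + 1) = x h * ∏ j ∈ P i, x j := fun v hv => by
    rw [← prod_erase_mul _ _ hv, pow_succ, ← mul_assoc, hS.petal_eq hx hv, mul_assoc]
  have hprod := prod_congr rfl hv
  rw [prod_mul_distrib, prod_const, prod_pow, prod_const, hS.card_eq i, mul_pow,
    pow_succ] at hprod
  exact mul_left_cancel₀ (pow_ne_zero (k - 1) (prod_ne_zero_iff.mpr hi))
    (by linear_combination hprod)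

lemma eigval_eq_card_full_petals (hS : IsHyperstarPartition k h P) (hodd : Odd (k - 1))
    (hx : IsLapEigvec k (hyperstarEdges h P) lam x) (hx0 : x ≠ 0) (hlam : lam ≠ 1) :
    (lam - Fintype.card ι) * (lam - 1) ^ (k - 1) = #{i | ∀ v ∈ P i, x v ≠ 0} := by
  have hk : 2 ≤ k := by have := hodd.pos; omega
  have hterm : ∀ i, (1 - lam) ^ (k - 1) * ∏ j ∈ P i, x j =
      if ∀ v ∈ P i, x v ≠ 0 then x h ^ (k - 1) else 0 := fun i => by
    split_ifs with hi
    · exact hS.petal_prod_eq hx hi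
    · push Not at hi
      obtain ⟨v, hv, hxv⟩ := hi
      rw [prod_eq_zero hv hxv, mul_zero]
  have hsum : (1 - lam) ^ (k - 1) * ((Fintype.card ι - lam) * x h ^ (k - 1)) =
      #{i | ∀ v ∈ P i, x v ≠ 0} * x h ^ (k - 1) := by
    rw [hS.heart_eq hk hx, mul_sum, sum_congr rfl fun i _ => hterm i, ← sum_filter, sum_const,
      nsmul_eq_mul]
  rw [← neg_sub lam 1, hodd.neg_pow] at hsum
  refine mul_right_cancel₀ (pow_ne_zero (k - 1) (hS.heart_ne_zero hx hx0 hlam)) ?_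
  linear_combination hsum

lemma ne_zero_of_eigval (hS : IsHyperstarPartition k h P) (hodd : Odd (k - 1))
    (hx : IsLapEigvec k (hyperstarEdges h P) lam x) (hx0 : x ≠ 0) (hlam : lam ≠ 1)
    (hlamD : (lam - Fintype.card ι) * (lam - 1) ^ (k - 1) = Fintype.card ι) (v : α) :
    x v ≠ 0 := by
  rcases eq_or_ne v h with rfl | hvh
  · exact hS.heart_ne_zero hx hx0 hlam
  obtain ⟨i, hi⟩ := hS.exists_mem v hvh
  rw [hS.eigval_eq_card_full_petals hodd hx hx0 hlam, Nat.cast_inj, ← card_univ,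
    card_filter_eq_iff] at hlamD
  exact hlamD i (mem_univ i) v hi

lemma largest_eigval_eq (hS : IsHyperstarPartition k h P) (hodd : Odd (k - 1)) [Nonempty ι]
    (hlam : IsLargestLapEig k (hyperstarEdges h P) lam) {t : ℝ} (hDt : Fintype.card ι < t)
    (ht : (t - Fintype.card ι) * (t - 1) ^ (k - 1) = Fintype.card ι) :
    lam = t := by
  have hk : 2 ≤ k := by have := hodd.pos; omega
  have hD : (1 : ℝ) ≤ Fintype.card ι := by exact_mod_cast Fintype.card_pos
  have htlam : t ≤ lam := hlam.2 t
    ⟨_, hS.update_one_ne_zero hk _, hS.isLapEigvec_update_one hodd ht⟩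
  obtain ⟨x, hx0, hx⟩ := hlam.1
  have hcount := hS.eigval_eq_card_full_petals hodd hx hx0 (by linarith)
  have hle : (#{i | ∀ v ∈ P i, x v ≠ 0} : ℝ) ≤ Fintype.card ι := by
    exact_mod_cast card_le_univ _
  refine le_antisymm ?_ htlam
  rw [← (strictMonoOn_sub_mul_sub_one_pow (k - 1) hD).le_iff_le (hDt.trans_le htlam) hDt]
  linarith

end Eigvec

end IsHyperstarPartition

theorem hyperstar_even_full_support_general {n k d : ℕ} (hk : 3 ≤ k)
    (hkeven : Even k) (hd : 0 < d) (h : Fin n) (P : Fin d → Finset (Fin n))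
    (hhP : ∀ i, h ∉ P i) (hPcard : ∀ i, (P i).card = k - 1)
    (hPdisj : ∀ i j, i ≠ j → Disjoint (P i) (P j))
    (hPcover : ∀ v : Fin n, v ≠ h → ∃ i, v ∈ P i)
    (E : Finset (Finset (Fin n)))
    (hE : E = Finset.image (fun i => insert h (P i)) Finset.univ)
    (lam : ℝ) (hlam : IsLargestLapEig k E lam) :
    (∀ x : Fin n → ℝ, x ≠ 0 → (∀ i, lapAct k E x i = lam * x i ^ (k - 1)) →
      ∀ i, x i ≠ 0) ∧
    ∃ z : Fin n → ℝ, z ≠ 0 ∧ (∀ i, lapAct k E z i = lam * z i ^ (k - 1)) ∧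
      ∃ c : ℝ, ∀ i, i ≠ h → z i = c := by
  subst hE
  have hS : IsHyperstarPartition k h P := ⟨hhP, hPcard, fun i j => hPdisj i j, hPcover⟩
  have hodd : Odd (k - 1) := Nat.Even.sub_odd (by omega) hkeven odd_one
  have : Nonempty (Fin d) := ⟨⟨0, hd⟩⟩
  have hD : (1 : ℝ) ≤ Fintype.card (Fin d) := by exact_mod_cast Fintype.card_pos
  obtain ⟨t, hDt, ht⟩ := exists_gt_sub_mul_sub_one_pow_eq (k - 1) hD
  obtain rfl := hS.largest_eigval_eq hodd hlam hDt ht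
  refine ⟨fun x hx0 hx => hS.ne_zero_of_eigval hodd hx hx0 (by linarith) ht,
    update 1 h (1 - lam), hS.update_one_ne_zero (by omega) _,
    hS.isLapEigvec_update_one hodd ht, 1, fun i hi => update_of_ne hi _ _⟩

/-- For `k` even and a `k`-uniform hyperstar of size `d > 0` with heart
`h` and Laplacian tensor `L`: every H-eigenvector of `L` corresponding to `λ(L)` has
full support `[n]`; moreover there is an H-eigenvector `z` of `L` corresponding to
`λ(L)` such that `z i` is a constant for all vertices `i` other than the heart. -/
theorem hyperstar_even_full_support {n k d : ℕ} (hk : 3 ≤ k) (hkn : k ≤ n)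
    (hkeven : Even k) (hd : 0 < d) (h : Fin n) (P : Fin d → Finset (Fin n))
    (hhP : ∀ i, h ∉ P i) (hPcard : ∀ i, (P i).card = k - 1)
    (hPdisj : ∀ i j, i ≠ j → Disjoint (P i) (P j))
    (hPcover : ∀ v : Fin n, v ≠ h → ∃ i, v ∈ P i)
    (E : Finset (Finset (Fin n)))
    (hE : E = Finset.image (fun i => insert h (P i)) Finset.univ)
    (lam : ℝ) (hlam : IsLargestLapEig k E lam) :
    (∀ x : Fin n → ℝ, x ≠ 0 → (∀ i, lapAct k E x i = lam * x i ^ (k - 1)) →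
      ∀ i, x i ≠ 0) ∧
    ∃ z : Fin n → ℝ, z ≠ 0 ∧ (∀ i, lapAct k E z i = lam * z i ^ (k - 1)) ∧
      ∃ c : ℝ, ∀ i, i ≠ h → z i = c :=
  hyperstar_even_full_support_general hk hkeven hd h P hhP hPcard hPdisj hPcover E hE lam hlam
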